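/- Fix n ≥ 4. For 2 ≤ ℓ < λ ≤ n-1 with λ ≥ ℓ+2, let f̃ ∈ ℝ^{3×n} be defined by f̃_{1,j} = 1 for ℓ+1 ≤ j ≤ λ-1; f̃_{2,j} = -1 for j = ℓ and ℓ+1 ≤ j ≤ λ; all other entries 0. Then for every tuple u = (a,b,c) of the matching field B^{λ-1}_{ℓ-1} (so v_u = e_{1,a}+e_{2,b}+e_{3,c}): ⟨v_u, f̃⟩ = -1 if (a,b) = (ℓ,λ); ⟨v_u, f̃⟩ = 1 if ℓ < a < λ < b or b < ℓ < a < λ; and ⟨v_u, f̃⟩ = 0 otherwise. -/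

import Mathlib

open RealInnerProductSpace

/-- The vertex of `ℝ^{3×n}` associated to a tuple `(a,b,c)` (entries 1-indexed):
`e_{1,a} + e_{2,b} + e_{3,c}`. -/
def tupleVertex (n : ℕ) (a b c : ℕ) : EuclideanSpace ℝ (Fin 3 × Fin n) :=
  WithLp.toLp 2 fun p =>
    if (p.1 = 0 ∧ (p.2 : ℕ) + 1 = a) ∨ (p.1 = 1 ∧ (p.2 : ℕ) + 1 = b) ∨
        (p.1 = 2 ∧ (p.2 : ℕ) + 1 = c) then 1 else 0

/-- The vector `f̃ ∈ ℝ^{3×n}` with `f̃_{1,j} = 1` for `ℓ+1 ≤ j ≤ λ-1`,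
`f̃_{2,j} = -1` for `ℓ ≤ j ≤ λ`, and all other entries `0` (1-indexed columns). -/
def ftilde (n ℓ lam : ℕ) : EuclideanSpace ℝ (Fin 3 × Fin n) :=
  WithLp.toLp 2 fun p =>
    if p.1 = 0 ∧ ℓ + 1 ≤ (p.2 : ℕ) + 1 ∧ (p.2 : ℕ) + 1 ≤ lam - 1 then 1
    else if p.1 = 1 ∧ ℓ ≤ (p.2 : ℕ) + 1 ∧ (p.2 : ℕ) + 1 ≤ lam then -1
    else 0

/-- The tuples of the intermediate matching field `B^{λ-1}_{ℓ-1}` for Gr(3,n)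
(case `λ - 1 < n`). -/
def interTuples' (n ℓ lam : ℕ) : Set (ℕ × ℕ × ℕ) :=
  { t | (∃ p q r : ℕ, 1 ≤ p ∧ p < q ∧ q ≤ ℓ - 1 ∧ q < r ∧ r ≤ n ∧ t = (p, q, r)) ∨
        (∃ p q r : ℕ, 1 ≤ p ∧ p ≤ ℓ - 1 ∧ ℓ - 1 < q ∧ q < r ∧ r ≤ n ∧ t = (q, p, r)) ∨
        (∃ q r : ℕ, ℓ < q ∧ q ≤ lam - 1 ∧ q < r ∧ r ≤ n ∧ t = (q, ℓ, r)) ∨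
        (∃ q r : ℕ, lam - 1 < q ∧ q < r ∧ r ≤ n ∧ t = (ℓ, q, r)) ∨
        (∃ p q r : ℕ, ℓ < p ∧ p < q ∧ q < r ∧ r ≤ n ∧ t = (p, q, r)) }

lemma inner_tv (n a b c : ℕ) (ha : a - 1 < n) (hb : b - 1 < n) (hc : c - 1 < n)
    (ha1 : 1 ≤ a) (hb1 : 1 ≤ b) (hc1 : 1 ≤ c) (y : EuclideanSpace ℝ (Fin 3 × Fin n)) :
    (⟪tupleVertex n a b c, y⟫ : ℝ) =
      y (0, ⟨a-1, ha⟩) + y (1, ⟨b-1, hb⟩) + y (2, ⟨c-1, hc⟩) := by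
  classical
  rw [PiLp.inner_apply, Fintype.sum_prod_type, Fin.sum_univ_three]
  have e0 : ∀ j : Fin n, (inner ℝ (tupleVertex n a b c (0, j)) (y (0, j)) : ℝ)
      = if j = ⟨a-1, ha⟩ then y (0, j) else 0 := by
    intro j
    have h : ((0:Fin 3) = 0 ∧ (j:ℕ)+1 = a ∨ (0:Fin 3) = 1 ∧ (j:ℕ)+1 = b ∨
        (0:Fin 3) = 2 ∧ (j:ℕ)+1 = c) ↔ j = ⟨a-1, ha⟩ := by
      simp only [Fin.ext_iff]; norm_num; omega
    have hv : tupleVertex n a b c ((0:Fin 3), j) = if j = ⟨a-1, ha⟩ then 1 else 0 := by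
      show (if ((0:Fin 3) = 0 ∧ (j:ℕ)+1 = a ∨ (0:Fin 3) = 1 ∧ (j:ℕ)+1 = b ∨
        (0:Fin 3) = 2 ∧ (j:ℕ)+1 = c) then (1:ℝ) else 0) = _
      exact if_congr h rfl rfl
    rw [RCLike.inner_apply', conj_trivial, hv, ite_mul, one_mul, zero_mul]
  have e1 : ∀ j : Fin n, (inner ℝ (tupleVertex n a b c (1, j)) (y (1, j)) : ℝ)
      = if j = ⟨b-1, hb⟩ then y (1, j) else 0 := by
    intro j
    have h : ((1:Fin 3) = 0 ∧ (j:ℕ)+1 = a ∨ (1:Fin 3) = 1 ∧ (j:ℕ)+1 = b ∨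
        (1:Fin 3) = 2 ∧ (j:ℕ)+1 = c) ↔ j = ⟨b-1, hb⟩ := by
      simp only [Fin.ext_iff]; norm_num; omega
    have hv : tupleVertex n a b c ((1:Fin 3), j) = if j = ⟨b-1, hb⟩ then 1 else 0 := by
      show (if ((1:Fin 3) = 0 ∧ (j:ℕ)+1 = a ∨ (1:Fin 3) = 1 ∧ (j:ℕ)+1 = b ∨
        (1:Fin 3) = 2 ∧ (j:ℕ)+1 = c) then (1:ℝ) else 0) = _
      exact if_congr h rfl rfl
    rw [RCLike.inner_apply', conj_trivial, hv, ite_mul, one_mul, zero_mul]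
  have e2 : ∀ j : Fin n, (inner ℝ (tupleVertex n a b c (2, j)) (y (2, j)) : ℝ)
      = if j = ⟨c-1, hc⟩ then y (2, j) else 0 := by
    intro j
    have h : ((2:Fin 3) = 0 ∧ (j:ℕ)+1 = a ∨ (2:Fin 3) = 1 ∧ (j:ℕ)+1 = b ∨
        (2:Fin 3) = 2 ∧ (j:ℕ)+1 = c) ↔ j = ⟨c-1, hc⟩ := by
      simp only [Fin.ext_iff]; norm_num; omega
    have hv : tupleVertex n a b c ((2:Fin 3), j) = if j = ⟨c-1, hc⟩ then 1 else 0 := by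
      show (if ((2:Fin 3) = 0 ∧ (j:ℕ)+1 = a ∨ (2:Fin 3) = 1 ∧ (j:ℕ)+1 = b ∨
        (2:Fin 3) = 2 ∧ (j:ℕ)+1 = c) then (1:ℝ) else 0) = _
      exact if_congr h rfl rfl
    rw [RCLike.inner_apply', conj_trivial, hv, ite_mul, one_mul, zero_mul]
  simp only [e0, e1, e2, Finset.sum_ite_eq', Finset.mem_univ, if_true]

lemma ftilde_val (n ℓ lam a b c : ℕ) (ha : a - 1 < n) (hb : b - 1 < n) (hc : c - 1 < n)
    (ha1 : 1 ≤ a) (hb1 : 1 ≤ b) :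
    ftilde n ℓ lam (0, ⟨a-1, ha⟩) + ftilde n ℓ lam (1, ⟨b-1, hb⟩) +
      ftilde n ℓ lam (2, ⟨c-1, hc⟩) =
    (if ℓ + 1 ≤ a ∧ a ≤ lam - 1 then (1:ℝ) else 0) +
      (if ℓ ≤ b ∧ b ≤ lam then (-1:ℝ) else 0) := by
  have h1 : a - 1 + 1 = a := by omega
  have h2 : b - 1 + 1 = b := by omega
  show ((if (0:Fin 3) = 0 ∧ ℓ + 1 ≤ a - 1 + 1 ∧ a - 1 + 1 ≤ lam - 1 then (1:ℝ)
      else if (0:Fin 3) = 1 ∧ ℓ ≤ a - 1 + 1 ∧ a - 1 + 1 ≤ lam then -1 else 0) +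
    (if (1:Fin 3) = 0 ∧ ℓ + 1 ≤ b - 1 + 1 ∧ b - 1 + 1 ≤ lam - 1 then (1:ℝ)
      else if (1:Fin 3) = 1 ∧ ℓ ≤ b - 1 + 1 ∧ b - 1 + 1 ≤ lam then -1 else 0) +
    (if (2:Fin 3) = 0 ∧ ℓ + 1 ≤ c - 1 + 1 ∧ c - 1 + 1 ≤ lam - 1 then (1:ℝ)
      else if (2:Fin 3) = 1 ∧ ℓ ≤ c - 1 + 1 ∧ c - 1 + 1 ≤ lam then -1 else 0)) = _
  rw [h1, h2]
  simp only [show ((0:Fin 3) = 0) = True from by simp,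
    show ((0:Fin 3) = 1) = False from by decide,
    show ((1:Fin 3) = 0) = False from by decide,
    show ((1:Fin 3) = 1) = True from by simp,
    show ((2:Fin 3) = 0) = False from by decide,
    show ((2:Fin 3) = 1) = False from by decide,
    true_and, false_and, if_false, add_zero]

theorem stmt13 (n ℓ lam : ℕ) (hn : 4 ≤ n) (hℓ : 2 ≤ ℓ) (hlam : ℓ + 2 ≤ lam)
    (hlam2 : lam ≤ n - 1) (a b c : ℕ) (ht : (a, b, c) ∈ interTuples' n ℓ lam) :
    (⟪tupleVertex n a b c, ftilde n ℓ lam⟫ : ℝ) =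
      if a = ℓ ∧ b = lam then -1
      else if (ℓ < a ∧ a < lam ∧ lam < b) ∨ (b < ℓ ∧ ℓ < a ∧ a < lam) then 1
      else 0 := by
  have hrange : 1 ≤ a ∧ 1 ≤ b ∧ 1 ≤ c ∧ a ≤ n ∧ b ≤ n ∧ c ≤ n := by
    rcases ht with ⟨p,q,r,h1,h2,h3,h4,h5,h6⟩ | ⟨p,q,r,h1,h2,h3,h4,h5,h6⟩ |
      ⟨q,r,h1,h2,h3,h4,h5⟩ | ⟨q,r,h1,h2,h3,h4⟩ | ⟨p,q,r,h1,h2,h3,h4,h5⟩ <;>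
      simp only [Prod.mk.injEq] at * <;> omega
  obtain ⟨ha1, hb1, hc1, han, hbn, hcn⟩ := hrange
  have ha : a - 1 < n := by omega
  have hb : b - 1 < n := by omega
  have hc : c - 1 < n := by omega
  rw [inner_tv n a b c ha hb hc ha1 hb1 hc1, ftilde_val n ℓ lam a b c ha hb hc ha1 hb1]
  rcases ht with ⟨p,q,r,h1,h2,h3,h4,h5,h6⟩ | ⟨p,q,r,h1,h2,h3,h4,h5,h6⟩ |
    ⟨q,r,h1,h2,h3,h4,h5⟩ | ⟨q,r,h1,h2,h3,h4⟩ | ⟨p,q,r,h1,h2,h3,h4,h5⟩ <;>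
    simp only [Prod.mk.injEq] at * <;>
    split_ifs <;> (first | omega | norm_num)
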